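/- If F is a π-tree on a topological space X and p ∈ X, then: (b1) the family {rise_F(p,U) : U a neighbourhood of p in X} has the finite intersection property; (b2) the intersection ⋂{rise_F(p,U) : U a neighbourhood of p in X} is empty; and (b3) for every neighbourhood U of p, rise_F(p,U) is an infinite subset of ω. -/

import Mathlib

open Set

universe u v

/-- A family `γ` π-refines `δ`: every nonempty member of `δ` contains a
nonempty member of `γ`. -/
def PiRefines {α : Type*} (γ δ : Set (Set α)) : Prop :=
  ∀ D ∈ δ, D.Nonempty → ∃ G ∈ γ, G.Nonempty ∧ G ⊆ D

/-- The finite intersection property. -/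
def HasFIP {α : Type*} (γ : Set (Set α)) : Prop :=
  ∀ δ : Set (Set α), δ ⊆ γ → δ.Finite → δ.Nonempty → (⋂₀ δ).Nonempty

/-- `cofin A` is the family of complements in `A` of finite subsets of `A`. -/
def cofin (A : Set ℕ) : Set (Set ℕ) :=
  {B | ∃ C : Set ℕ, C.Finite ∧ C ⊆ A ∧ B = A \ C}

/-- A foliage tree on `X`: a set-theoretic tree (strict partial order with
well-ordered sets of strict predecessors) with a leaf (a subset of `X`)
attached to each node. -/
structure FoliageTree (X : Type u) where
  Node : Type
  lt : Node → Node → Prop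
  lt_irrefl : ∀ a, ¬ lt a a
  lt_trans : ∀ {a b c}, lt a b → lt b c → lt a c
  wellOrdered : ∀ a : Node, IsWellOrder {b : Node // lt b a} fun x y => lt x.1 y.1
  leaf : Node → Set X

/-- Strict proper-extension order on finite sequences of naturals. -/
def seqLT (a b : List ℕ) : Prop := a <+: b ∧ a ≠ b

namespace FoliageTree

variable {X : Type u}

/-- The sons (immediate successors) of a node. -/
def Sons (F : FoliageTree X) (x : F.Node) : Set F.Node :=
  {s | F.lt x s ∧ ¬ ∃ t, F.lt x t ∧ F.lt t s}

/-- A node is maximal if it has no strict successor. -/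
def IsMaxNode (F : FoliageTree X) (x : F.Node) : Prop := ¬ ∃ s, F.lt x s

/-- A chain of nodes. -/
def IsChainN (F : FoliageTree X) (C : Set F.Node) : Prop :=
  ∀ x ∈ C, ∀ y ∈ C, F.lt x y ∨ x = y ∨ F.lt y x

/-- A branch is a maximal chain. -/
def IsBranch (F : FoliageTree X) (B : Set F.Node) : Prop :=
  F.IsChainN B ∧ ∀ C, F.IsChainN C → B ⊆ C → B = C

/-- The height of a node: the order type of its set of strict predecessors. -/
noncomputable def height (F : FoliageTree X) (v : F.Node) : Ordinal :=
  @Ordinal.type {b : F.Node // F.lt b v} (fun x y => F.lt x.1 y.1) (F.wellOrdered v)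

/-- `shoot F v`: unions of leaves over cofinite sets of sons of `v`. -/
def shoot (F : FoliageTree X) (v : F.Node) : Set (Set X) :=
  {S | ∃ C : Set F.Node, C ⊆ F.Sons v ∧ (F.Sons v \ C).Finite ∧ S = ⋃ s ∈ C, F.leaf s}

/-- `scope F p`: the nodes whose leaf contains `p`. -/
def scope (F : FoliageTree X) (p : X) : Set F.Node := {x | p ∈ F.leaf x}

/-- The union of all leaves. -/
def flesh (F : FoliageTree X) : Set X := ⋃ x, F.leaf x

/-- `F` is a foliage `ω,ω`-tree: its skeleton is order-isomorphic to
`(ω^{<ω}, ⊂)`. -/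
def IsOmegaOmegaTree (F : FoliageTree X) : Prop := Nonempty (F.lt ≃r seqLT)

/-- `F` is locally strict: the leaf of every non-maximal node is the disjoint
union of the leaves of its sons. -/
def LocallyStrict (F : FoliageTree X) : Prop :=
  ∀ x, ¬ F.IsMaxNode x →
    F.leaf x = (⋃ s ∈ F.Sons x, F.leaf s) ∧
      ∀ s ∈ F.Sons x, ∀ t ∈ F.Sons x, s ≠ t → Disjoint (F.leaf s) (F.leaf t)

/-- `F` has strict branches: it has nodes, and along every branch the
intersection of the leaves is a singleton. -/
def StrictBranches (F : FoliageTree X) : Prop :=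
  Nonempty F.Node ∧ ∀ B, F.IsBranch B → ∃ p, (⋂ x ∈ B, F.leaf x) = {p}

/-- `r` is the root: the least node. -/
def IsRoot (F : FoliageTree X) (r : F.Node) : Prop := ∀ x, r = x ∨ F.lt r x

/-- All leaves are open. -/
def OpenIn [TopologicalSpace X] (F : FoliageTree X) : Prop := ∀ x, IsOpen (F.leaf x)

/-- `F` is a Baire foliage tree on `X`. -/
def IsBaireFoliageTree [TopologicalSpace X] (F : FoliageTree X) : Prop :=
  F.OpenIn ∧ F.LocallyStrict ∧ F.IsOmegaOmegaTree ∧ F.StrictBranches ∧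
    ∃ r, F.IsRoot r ∧ F.leaf r = Set.univ

/-- `F` grows into `X`. -/
def GrowsInto [TopologicalSpace X] (F : FoliageTree X) : Prop :=
  ∀ p : X, ∀ U ∈ nhds p, ∃ z ∈ F.scope p, PiRefines (F.shoot z) {U}

/-- `F` is a π-tree on `X`. -/
def IsPiTree [TopologicalSpace X] (F : FoliageTree X) : Prop :=
  F.IsBaireFoliageTree ∧ F.GrowsInto

/-- `rise F p U`: the set of (finite) heights of nodes `v` whose leaf contains
`p` and whose shoot π-refines `{U}`. -/
noncomputable def rise (F : FoliageTree X) (p : X) (U : Set X) : Set ℕ :=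
  {n | ∃ v ∈ F.scope p, PiRefines (F.shoot v) {U} ∧ F.height v = (n : Ordinal)}

/-- `Rise F`: all sets `rise F p U` for `p ∈ X` and `U` a neighbourhood of `p`. -/
def Rise [TopologicalSpace X] (F : FoliageTree X) : Set (Set ℕ) :=
  {R | ∃ p U, U ∈ nhds p ∧ R = F.rise p U}

end FoliageTree

/-!
Transport the tree along its isomorphism with `(ω^{<ω}, ⊂)`: heights become lengths, leaves
shrink along extensions, and the nodes whose leaves contain `p` form a single branch. Strict
branches make every leaf nonempty, so no member of the shoot of `v` lies inside the leaf of one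
son of `v`. Hence a node whose shoot π-refines a neighbourhood inside the leaf of the level-`N`
node through `p` has height at least `N`. Growing into `X` then makes every rise unbounded (b3,
and with the monotonicity of rise, b1), while the leaf of the son through `p` of the level-`n`
node is a neighbourhood whose rise misses `n` (b2).
-/

theorem hasFIP_of_mono_of_nonempty {α β : Type*} {l : Filter α} {f : Set α → Set β}
    (hmono : ∀ U ∈ l, ∀ V, U ⊆ V → f U ⊆ f V) (hne : ∀ U ∈ l, (f U).Nonempty) :
    HasFIP {R | ∃ U ∈ l, R = f U} := by
  intro δ hδ hfin _
  have hδ' : ∀ R ∈ δ, ∃ U ∈ l, R = f U := fun R hR => hδ hR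
  choose! U hUl hU using hδ'
  have hW : (⋂ R ∈ δ, U R) ∈ l := (Filter.biInter_mem hfin).2 hUl
  obtain ⟨b, hb⟩ := hne _ hW
  refine ⟨b, Set.mem_sInter.2 fun R hR => ?_⟩
  rw [hU R hR]
  exact hmono _ hW _ (Set.biInter_subset_of_mem hR) hb

theorem PiRefines.singleton_mono {α : Type*} {γ : Set (Set α)} {U V : Set α}
    (h : PiRefines γ {U}) (hU : U.Nonempty) (hUV : U ⊆ V) : PiRefines γ {V} := by
  rintro D rfl -
  obtain ⟨G, hG, hGne, hGU⟩ := h U rfl hU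
  exact ⟨G, hG, hGne, hGU.trans hUV⟩

theorem seqLT_iff {a b : List ℕ} : seqLT a b ↔ a <+: b ∧ a.length < b.length :=
  ⟨fun ⟨hp, hne⟩ => ⟨hp, hp.length_le.lt_of_ne fun h => hne (hp.eq_of_length h)⟩,
    fun ⟨hp, hlt⟩ => ⟨hp, by rintro rfl; exact hlt.false⟩⟩

theorem seqLT_append_singleton (a : List ℕ) (i : ℕ) : seqLT a (a ++ [i]) :=
  seqLT_iff.2 ⟨List.prefix_append _ _, by simp⟩

theorem List.IsPrefix.exists_append_singleton_prefix {a b : List ℕ} (hp : a <+: b)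
    (hlt : a.length < b.length) : ∃ i, a ++ [i] <+: b := by
  obtain ⟨_ | ⟨i, c⟩, rfl⟩ := hp
  · simp at hlt
  · exact ⟨i, c, by simp⟩

theorem seqLT_covBy_iff {a b : List ℕ} :
    (seqLT a b ∧ ¬ ∃ c, seqLT a c ∧ seqLT c b) ↔ ∃ i, b = a ++ [i] := by
  constructor
  · rintro ⟨hab, hmin⟩
    obtain ⟨hp, hlt⟩ := seqLT_iff.1 hab
    obtain ⟨i, c, rfl⟩ := hp.exists_append_singleton_prefix hlt
    refine ⟨i, ?_⟩
    cases c with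
    | nil => simp
    | cons j c =>
      exact absurd ⟨a ++ [i], seqLT_append_singleton a i, seqLT_iff.2 ⟨List.prefix_append _ _,
        by simp⟩⟩ hmin
  · rintro ⟨i, rfl⟩
    refine ⟨seqLT_append_singleton a i, ?_⟩
    rintro ⟨c, hac, hcb⟩
    have := (seqLT_iff.1 hac).2
    have := (seqLT_iff.1 hcb).2
    simp only [List.length_append, List.length_singleton] at *
    omega

namespace FoliageTree

variable {X : Type u} {F : FoliageTree X}

theorem isChainN_iff_isChain {C : Set F.Node} : F.IsChainN C ↔ IsChain F.lt C := by
  refine ⟨fun h x hx y hy hxy => ?_, fun h x hx y hy => ?_⟩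
  · exact (h x hx y hy).imp_right (Or.resolve_left · hxy)
  · by_cases hxy : x = y
    · exact Or.inr (Or.inl hxy)
    · exact (h hx hy hxy).imp_right Or.inr

theorem isBranch_iff_isMaxChain {B : Set F.Node} : F.IsBranch B ↔ IsMaxChain F.lt B := by
  simp only [IsBranch, IsMaxChain, isChainN_iff_isChain]

theorem leaf_nonempty (hSB : F.StrictBranches) (v : F.Node) : (F.leaf v).Nonempty := by
  obtain ⟨B, hB, hvB⟩ := (IsChain.singleton (r := F.lt) (a := v)).exists_maxChain
  obtain ⟨q, hq⟩ := hSB.2 B (isBranch_iff_isMaxChain.2 hB)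
  exact ⟨q, Set.biInter_subset_of_mem (hvB rfl) (hq ▸ Set.mem_singleton q)⟩

theorem leaf_subset_of_mem_sons (hLS : F.LocallyStrict) {v s : F.Node} (hs : s ∈ F.Sons v) :
    F.leaf s ⊆ F.leaf v := by
  rw [(hLS v fun h => h ⟨s, hs.1⟩).1]
  exact Set.subset_biUnion_of_mem hs

theorem exists_mem_sons_mem_leaf (hLS : F.LocallyStrict) {v : F.Node} (hv : (F.Sons v).Nonempty)
    {p : X} (hp : p ∈ F.leaf v) : ∃ s ∈ F.Sons v, p ∈ F.leaf s := by
  obtain ⟨s₀, hs₀⟩ := hv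
  rw [(hLS v fun h => h ⟨s₀, hs₀.1⟩).1] at hp
  simpa using hp

theorem eq_of_mem_sons_of_mem_leaf (hLS : F.LocallyStrict) {v s t : F.Node} (hs : s ∈ F.Sons v)
    (ht : t ∈ F.Sons v) {p : X} (hps : p ∈ F.leaf s) (hpt : p ∈ F.leaf t) : s = t := by
  by_contra hst
  exact Set.disjoint_left.1 ((hLS v fun h => h ⟨s, hs.1⟩).2 s hs t ht hst) hps hpt

theorem not_subset_leaf_of_mem_shoot (hLS : F.LocallyStrict) (hne : ∀ w, (F.leaf w).Nonempty)
    {v s₀ : F.Node} (hinf : (F.Sons v).Infinite) (hs₀ : s₀ ∈ F.Sons v) {G : Set X}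
    (hG : G ∈ F.shoot v) : ¬ G ⊆ F.leaf s₀ := by
  obtain ⟨C, hC, hfin, rfl⟩ := hG
  intro hsub
  have hCinf : C.Infinite :=
    (hinf.sdiff hfin).mono ((Set.sdiff_sdiff_right_self _ _).subset.trans Set.inter_subset_right)
  obtain ⟨t, htC, hts⟩ := (hCinf.sdiff (Set.finite_singleton s₀)).nonempty
  obtain ⟨q, hq⟩ := hne t
  exact hts (eq_of_mem_sons_of_mem_leaf hLS (hC htC) hs₀ hq (hsub (Set.mem_biUnion htC hq)))

theorem rise_mono {p : X} {U V : Set X} (hU : U.Nonempty) (hUV : U ⊆ V) :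
    F.rise p U ⊆ F.rise p V :=
  fun _ ⟨v, hv, hUv, hh⟩ => ⟨v, hv, hUv.singleton_mono hU hUV, hh⟩

section OmegaOmega

variable (e : F.lt ≃r seqLT)

theorem lt_iff_seqLT {v w : F.Node} : F.lt v w ↔ seqLT (e v) (e w) := e.map_rel_iff.symm

theorem mem_sons_iff {v s : F.Node} : s ∈ F.Sons v ↔ ∃ i, e s = e v ++ [i] := by
  rw [← seqLT_covBy_iff, Sons, Set.mem_ofPred_eq, lt_iff_seqLT e, e.surjective.exists]
  simp only [lt_iff_seqLT e]

theorem sons_infinite (e : F.lt ≃r seqLT) (v : F.Node) : (F.Sons v).Infinite :=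
  Set.infinite_of_injective_forall_mem (f := fun i : ℕ => e.symm (e v ++ [i]))
    (fun i j hij => by simpa using congrArg e hij)
    (fun i => (mem_sons_iff e).2 ⟨i, e.apply_symm_apply _⟩)

theorem leaf_subset_of_prefix (hLS : F.LocallyStrict) {v w : F.Node} (h : e v <+: e w) :
    F.leaf w ⊆ F.leaf v := by
  obtain ⟨c, hc⟩ := h
  induction c generalizing v with
  | nil =>
    obtain rfl : v = w := by simpa using hc
    rfl
  | cons i c ih =>
    have hs : e.symm (e v ++ [i]) ∈ F.Sons v := (mem_sons_iff e).2 ⟨i, e.apply_symm_apply _⟩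
    exact (ih (by simpa using hc)).trans (leaf_subset_of_mem_sons hLS hs)

theorem prefix_or_prefix_of_mem_leaf (hLS : F.LocallyStrict) {p : X} {v w : F.Node}
    (hv : p ∈ F.leaf v) (hw : p ∈ F.leaf w) : e v <+: e w ∨ e w <+: e v := by
  suffices key : ∀ c a b, p ∈ F.leaf (e.symm (c ++ a)) → p ∈ F.leaf (e.symm (c ++ b)) →
      a <+: b ∨ b <+: a by
    simpa using key [] (e v) (e w) (by simpa using hv) (by simpa using hw)
  intro c a
  induction a generalizing c with
  | nil => exact fun _ _ _ => Or.inl List.nil_prefix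
  | cons i a ih =>
    rintro (_ | ⟨j, b⟩) ha hb
    · exact Or.inr List.nil_prefix
    have son : ∀ k, e.symm (c ++ [k]) ∈ F.Sons (e.symm c) := fun k =>
      (mem_sons_iff e).2 ⟨k, by simp⟩
    have below : ∀ k d, F.leaf (e.symm (c ++ k :: d)) ⊆ F.leaf (e.symm (c ++ [k])) := fun k d =>
      leaf_subset_of_prefix e hLS (by simp)
    obtain rfl : i = j := by
      simpa using congrArg e (eq_of_mem_sons_of_mem_leaf hLS (son i) (son j) (below i a ha)
        (below j b hb))
    simpa using ih (c ++ [i]) b (by simpa using ha) (by simpa using hb)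

theorem height_eq_length (v : F.Node) : F.height v = (e v).length := by
  have := F.wellOrdered v
  have hlt : ∀ b : {b // F.lt b v}, (e b).length < (e v).length := fun b =>
    (seqLT_iff.1 ((lt_iff_seqLT e).1 b.2)).2
  let emb : (fun x y : {b // F.lt b v} => F.lt x.1 y.1) ↪r
      ((· < ·) : Fin (e v).length → Fin (e v).length → Prop) :=
    RelEmbedding.ofMonotone (fun b => ⟨_, hlt b⟩) fun a b hab =>
      (seqLT_iff.1 ((lt_iff_seqLT e).1 hab)).2
  have hsurj : Function.Surjective emb := by
    intro i
    have hi : F.lt (e.symm ((e v).take i)) v := by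
      rw [lt_iff_seqLT e, e.apply_symm_apply, seqLT_iff]
      exact ⟨List.take_prefix _ _, by simp⟩
    exact ⟨⟨_, hi⟩, Fin.ext (show (e (e.symm ((e v).take i))).length = i by simp [i.2.le])⟩
  exact (Ordinal.type_eq.2 ⟨RelIso.ofSurjective emb hsurj⟩).trans (Ordinal.type_fin _)

theorem mem_rise_iff {p : X} {U : Set X} {n : ℕ} :
    n ∈ F.rise p U ↔ ∃ v ∈ F.scope p, PiRefines (F.shoot v) {U} ∧ (e v).length = n := by
  simp only [rise, Set.mem_ofPred_eq, height_eq_length e, Nat.cast_inj]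

theorem exists_mem_leaf_length_eq (hLS : F.LocallyStrict) {p : X} {v : F.Node}
    (hp : p ∈ F.leaf v) (k : ℕ) : ∃ w, p ∈ F.leaf w ∧ (e w).length = (e v).length + k := by
  induction k with
  | zero => exact ⟨v, hp, rfl⟩
  | succ k ih =>
    obtain ⟨w, hpw, hw⟩ := ih
    obtain ⟨s, hs, hps⟩ := exists_mem_sons_mem_leaf hLS (sons_infinite e w).nonempty hpw
    obtain ⟨i, hi⟩ := (mem_sons_iff e).1 hs
    exact ⟨s, hps, by simp [hi, hw, add_assoc]⟩

/-- If `v` were strictly below `w`, the leaf of `w` would lie inside the leaf of a single son of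
`v`, and no member of the shoot of `v` fits into one son's leaf. -/
theorem length_le_of_piRefines_leaf (hLS : F.LocallyStrict) (hne : ∀ w, (F.leaf w).Nonempty)
    {p : X} {v w : F.Node} (hv : p ∈ F.leaf v) (hw : p ∈ F.leaf w)
    (h : PiRefines (F.shoot v) {F.leaf w}) : (e w).length ≤ (e v).length := by
  by_contra! hlt
  have hvw : e v <+: e w := (prefix_or_prefix_of_mem_leaf e hLS hv hw).resolve_right
    fun hwv => hlt.not_ge hwv.length_le
  obtain ⟨i, hi⟩ := hvw.exists_append_singleton_prefix hlt
  have hs : e.symm (e v ++ [i]) ∈ F.Sons v := (mem_sons_iff e).2 ⟨i, e.apply_symm_apply _⟩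
  obtain ⟨G, hG, -, hGw⟩ := h _ rfl ⟨p, hw⟩
  exact not_subset_leaf_of_mem_shoot hLS hne (sons_infinite e v) hs hG
    (hGw.trans (leaf_subset_of_prefix e hLS (by simpa using hi)))

end OmegaOmega

theorem IsPiTree.exists_le_mem_rise [TopologicalSpace X] (hF : F.IsPiTree) {p : X} {U : Set X}
    (hU : U ∈ nhds p) (N : ℕ) : ∃ n ∈ F.rise p U, N ≤ n := by
  obtain ⟨⟨hOpen, hLS, ⟨e⟩, hSB, r, -, hr⟩, hGrow⟩ := hF
  obtain ⟨v, hpv, hv⟩ := exists_mem_leaf_length_eq e hLS (hr ▸ Set.mem_univ p : p ∈ F.leaf r) N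
  have hW : U ∩ F.leaf v ∈ nhds p := Filter.inter_mem hU ((hOpen v).mem_nhds hpv)
  obtain ⟨z, hpz, hz⟩ := hGrow p _ hW
  have hWne : (U ∩ F.leaf v).Nonempty := ⟨p, mem_of_mem_nhds hW⟩
  refine ⟨(e z).length, (mem_rise_iff e).2 ⟨z, hpz, hz.singleton_mono hWne Set.inter_subset_left,
    rfl⟩, ?_⟩
  calc N ≤ (e v).length := by omega
    _ ≤ (e z).length := length_le_of_piRefines_leaf e hLS (leaf_nonempty hSB) hpz hpv
        (hz.singleton_mono hWne Set.inter_subset_right)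

theorem IsPiTree.rise_infinite [TopologicalSpace X] (hF : F.IsPiTree) {p : X} {U : Set X}
    (hU : U ∈ nhds p) : (F.rise p U).Infinite :=
  Set.infinite_of_forall_exists_gt fun N =>
    (hF.exists_le_mem_rise hU (N + 1)).imp fun _ ⟨hn, hNn⟩ => ⟨hn, hNn⟩

/-- A height `n` in every rise gives a node `v` of height `n` containing `p`; the leaf of the son
of `v` through `p` is a neighbourhood whose rise only contains heights above `n`. -/
theorem IsPiTree.iInter_rise_eq_empty [TopologicalSpace X] (hF : F.IsPiTree) (p : X) :
    ⋂ U ∈ nhds p, F.rise p U = ∅ := by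
  obtain ⟨⟨hOpen, hLS, ⟨e⟩, hSB, -⟩, -⟩ := hF
  refine Set.eq_empty_iff_forall_notMem.2 fun n hn => ?_
  rw [Set.mem_iInter₂] at hn
  obtain ⟨v, hpv, -, rfl⟩ := (mem_rise_iff e).1 (hn Set.univ Filter.univ_mem)
  obtain ⟨s, hs, hps⟩ := exists_mem_sons_mem_leaf hLS (sons_infinite e v).nonempty hpv
  obtain ⟨w, hpw, hw, hlen⟩ := (mem_rise_iff e).1 (hn _ ((hOpen s).mem_nhds hps))
  obtain ⟨i, hi⟩ := (mem_sons_iff e).1 hs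
  have := length_le_of_piRefines_leaf e hLS (leaf_nonempty hSB) hpw hps hw
  simp [hi, hlen] at this

end FoliageTree

/-- Lemma `rem.rise.vs.grow.into` (b) of the paper. -/
theorem rise_FIP_empty_intersection_infinite
    {X : Type u} [TopologicalSpace X] (F : FoliageTree X) (hF : F.IsPiTree) (p : X) :
    HasFIP {R | ∃ U ∈ nhds p, R = F.rise p U} ∧
      (⋂ U ∈ nhds p, F.rise p U) = ∅ ∧
      ∀ U ∈ nhds p, (F.rise p U).Infinite :=
  ⟨hasFIP_of_mono_of_nonempty
      (fun _ hU _ hUV => F.rise_mono ⟨p, mem_of_mem_nhds hU⟩ hUV)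
      fun _ hU => (hF.rise_infinite hU).nonempty,
    hF.iInter_rise_eq_empty p, fun _ hU => hF.rise_infinite hU⟩
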